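/- arXiv:2204.03391 — 6 statements merged into one kernel-verified Lean document; each statement's English description precedes it below -/
import Mathlib

section
/- Let R be a semiring, V a free R-module with basis (ε_i)_{i∈I}, and q: V → R a quadratic form (i.e., q(cx) = c²q(x) and there exists a symmetric bilinear form b with q(x+y) = q(x)+q(y)+b(x,y)). Then q admits an expansion: a bilinear form B: V × V → R with q(x) = B(x,x) for all x, and consequently q admits a balanced companion, i.e., a symmetric bilinear companion b̃ with b̃(x,x) = 2q(x) for all x ∈ V. -/
/-- A (not necessarily symmetric) `R`-bilinear form on `V`. -/
def IsBilin {R : Type*} [CommSemiring R] {V : Type*} [AddCommMonoid V] [Module R V]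
    (b : V → V → R) : Prop :=
  (∀ x y z : V, b (x + y) z = b x z + b y z) ∧
  (∀ x y z : V, b x (y + z) = b x y + b x z) ∧
  (∀ (c : R) (x y : V), b (c • x) y = c * b x y) ∧
  (∀ (c : R) (x y : V), b x (c • y) = c * b x y)

/-- `b` is a (symmetric bilinear) companion of `q`. -/
def IsCompanion {R : Type*} [CommSemiring R] {V : Type*} [AddCommMonoid V] [Module R V]
    (q : V → R) (b : V → V → R) : Prop :=
  IsBilin b ∧ (∀ x y : V, b x y = b y x) ∧ ∀ x y : V, q (x + y) = q x + q y + b x y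

/-- `q` is a quadratic form: homogeneous of degree 2 and admitting some companion. -/
def IsQuadForm {R : Type*} [CommSemiring R] {V : Type*} [AddCommMonoid V] [Module R V]
    (q : V → R) : Prop :=
  (∀ (c : R) (x : V), q (c • x) = c ^ 2 * q x) ∧ ∃ b, IsCompanion q b


/-!
Well-order the basis and let `T` be the "upper triangular" bilinear form with
`T(εᵢ, εᵢ) = q(εᵢ)`, `T(εᵢ, εⱼ) = b(εᵢ, εⱼ)` for `i < j` and `0` for `i > j`. Then `q(x) = T(x, x)`
by induction on the support of `x`, adding the largest basis direction last: `q` and `T(·, ·)`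
agree on multiples of a basis vector by homogeneity, and the cross term `b(x, y)` of a sum
matches `T(x, y) + T(y, x)` as soon as `y` lies along a basis vector beyond the support of `x`.
The identity `b(εᵢ, εᵢ) = 2 q(εᵢ)`, which may fail without cancellation in `R`, is never needed.
-/

variable {R : Type*} [CommSemiring R] {V : Type*} [AddCommMonoid V] [Module R V]

namespace IsBilin

variable {b : V → V → R}

def toLinearMap₂ (hb : IsBilin b) : V →ₗ[R] V →ₗ[R] R :=
  LinearMap.mk₂ R b hb.1 hb.2.2.1 hb.2.1 hb.2.2.2

theorem sum_left (hb : IsBilin b) {ι : Type*} (s : Finset ι) (f : ι → V) (y : V) :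
    b (∑ i ∈ s, f i) y = ∑ i ∈ s, b (f i) y :=
  map_sum (hb.toLinearMap₂.flip y) f s

theorem isCompanion_add_swap {q : V → R} (hb : IsBilin b) (hq : ∀ x, q x = b x x) :
    IsCompanion q fun x y => b x y + b y x := by
  obtain ⟨hadd_left, hadd_right, hsmul_left, hsmul_right⟩ := hb
  refine ⟨⟨?_, ?_, ?_, ?_⟩, fun x y => add_comm _ _, ?_⟩ <;> intros <;>
    simp only [hadd_left, hadd_right, hsmul_left, hsmul_right, hq] <;> ring

end IsBilin

theorem LinearMap.isBilin (B : V →ₗ[R] V →ₗ[R] R) : IsBilin fun x y => B x y :=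
  ⟨fun x y z => by simp, fun x y z => by simp, fun c x y => by simp, fun c x y => by simp⟩

theorem IsCompanion.apply_add_eq_of_cross {q : V → R} {b : V → V → R} (hb : IsCompanion q b)
    (B : V →ₗ[R] V →ₗ[R] R) {x y : V} (hx : q x = B x x) (hy : q y = B y y)
    (hxy : b x y = B x y + B y x) : q (x + y) = B (x + y) (x + y) := by
  rw [hb.2.2, hx, hy, hxy]
  simp only [map_add, LinearMap.add_apply]
  ring

section TriangularForm

variable {ι : Type*} [LinearOrder ι] (ε : Module.Basis ι R V) (q : V → R) (b : V → V → R)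

noncomputable def triangularForm : V →ₗ[R] V →ₗ[R] R :=
  ε.constr R fun i => ε.constr R fun j =>
    if i = j then q (ε i) else if i < j then b (ε i) (ε j) else 0

theorem triangularForm_basis (i j : ι) :
    triangularForm ε q b (ε i) (ε j) =
      if i = j then q (ε i) else if i < j then b (ε i) (ε j) else 0 := by
  simp [triangularForm]

variable {ε q b}

theorem triangularForm_smul_basis_self (hsmul : ∀ (c : R) (x : V), q (c • x) = c ^ 2 * q x)
    (c : R) (i : ι) : q (c • ε i) = triangularForm ε q b (c • ε i) (c • ε i) := by
  simp [triangularForm_basis, hsmul, pow_two, mul_assoc]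

theorem triangularForm_cross_of_lt (hb : IsBilin b) {s : Finset ι} {a : ι}
    (hs : ∀ i ∈ s, i < a) (c : ι → R) (d : R) :
    b (∑ i ∈ s, c i • ε i) (d • ε a) =
      triangularForm ε q b (∑ i ∈ s, c i • ε i) (d • ε a) +
        triangularForm ε q b (d • ε a) (∑ i ∈ s, c i • ε i) := by
  simp only [hb.sum_left, map_sum, LinearMap.sum_apply, ← Finset.sum_add_distrib]
  refine Finset.sum_congr rfl fun i hi => ?_
  have hia := hs i hi
  simp only [map_smul, LinearMap.smul_apply, triangularForm_basis, hia.ne, hia.ne', hia,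
    not_lt_of_gt hia, ↓reduceIte, smul_eq_mul, mul_zero, add_zero]
  rw [hb.2.2.1, hb.2.2.2]
  ring

theorem IsCompanion.apply_sum_eq_triangularForm (hb : IsCompanion q b)
    (hsmul : ∀ (c : R) (x : V), q (c • x) = c ^ 2 * q x) (s : Finset ι) (c : ι → R) :
    q (∑ i ∈ s, c i • ε i) =
      triangularForm ε q b (∑ i ∈ s, c i • ε i) (∑ i ∈ s, c i • ε i) := by
  classical
  induction s using Finset.induction_on_max with
  | empty => simpa using hsmul 0 0
  | insert a s hs ih =>
    rw [Finset.sum_insert fun has => lt_irrefl a (hs a has), add_comm]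
    exact hb.apply_add_eq_of_cross _ ih (triangularForm_smul_basis_self hsmul _ _)
      (triangularForm_cross_of_lt hb.1 hs c (c a))

end TriangularForm

theorem IsQuadForm.exists_expansion {ι : Type*} (ε : Module.Basis ι R V) {q : V → R}
    (hq : IsQuadForm q) : ∃ B : V → V → R, IsBilin B ∧ ∀ x, q x = B x x := by
  obtain ⟨hsmul, b, hb⟩ := hq
  let : LinearOrder ι := IsWellOrder.linearOrder WellOrderingRel
  refine ⟨fun x y => triangularForm ε q b x y, (triangularForm ε q b).isBilin, fun x => ?_⟩
  rw [← ε.linearCombination_repr x, Finsupp.linearCombination_apply, Finsupp.sum]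
  exact hb.apply_sum_eq_triangularForm hsmul _ _

/-- Over a free module, every quadratic form admits an expansion and hence a
balanced companion. -/
theorem stmt0 {I : Type*} (ε : Module.Basis I R V) (q : V → R) (hq : IsQuadForm q) :
    (∃ B : V → V → R, IsBilin B ∧ ∀ x : V, q x = B x x) ∧
    (∃ bb : V → V → R, IsCompanion q bb ∧ ∀ x : V, bb x x = 2 * q x) := by
  obtain ⟨B, hB, hqB⟩ := hq.exists_expansion ε
  exact ⟨⟨B, hB, hqB⟩, _, hB.isCompanion_add_swap hqB, fun x => by rw [hqB]; ring⟩
end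

section
/- Let R be a semiring, V an R-module with a system of generators (ε_i)_{i∈I}, and q: V → R a quadratic form such that q(ε_i) = 0 for all i ∈ I. Then q is rigid (has exactly one companion b), and this unique companion satisfies b(x,x) = 2q(x) for all x, i.e., it is balanced. Moreover b(ε_i, ε_j) = q(ε_i + ε_j) for all i, j. -/
variable {R : Type*} [CommSemiring R] {V : Type*} [AddCommMonoid V] [Module R V]

/-- If `q` vanishes on a system of generators, then `q` is rigid, its unique companion
is balanced, and `b (ε i) (ε j) = q (ε i + ε j)`. -/
theorem stmt2 {I : Type*} (ε : I → V) (hgen : Submodule.span R (Set.range ε) = ⊤)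
    (q : V → R) (hq : IsQuadForm q) (h0 : ∀ i : I, q (ε i) = 0) :
    (∃! b : V → V → R, IsCompanion q b) ∧
    ∀ b : V → V → R, IsCompanion q b →
      (∀ x : V, b x x = 2 * q x) ∧ ∀ i j : I, b (ε i) (ε j) = q (ε i + ε j) := by
  obtain ⟨h2, b0, hb0⟩ := hq
  have hq0 : q 0 = 0 := by
    have := h2 0 0
    simpa using this
  -- basic zero lemmas for any companion
  have bz : ∀ b : V → V → R, IsCompanion q b → ∀ y, b 0 y = 0 := by
    intro b hb y
    have := hb.1.2.2.1 0 0 y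
    simpa using this
  have bz' : ∀ b : V → V → R, IsCompanion q b → ∀ y, b y 0 = 0 := by
    intro b hb y
    rw [hb.2.1]; exact bz b hb y
  -- any companion agrees on generators
  have key : ∀ b : V → V → R, IsCompanion q b → ∀ i j, b (ε i) (ε j) = q (ε i + ε j) := by
    intro b hb i j
    rw [hb.2.2 (ε i) (ε j), h0 i, h0 j, zero_add, zero_add]
  -- balanced
  have bal : ∀ b : V → V → R, IsCompanion q b → ∀ x, b x x = 2 * q x := by
    intro b hb x
    obtain ⟨hba, hba', hbs, hbs'⟩ := hb.1
    have hx : x ∈ Submodule.span R (Set.range ε) := hgen ▸ Submodule.mem_top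
    induction hx using Submodule.span_induction with
    | mem v hv =>
      obtain ⟨i, rfl⟩ := hv
      rw [key b hb i i, h0 i, mul_zero]
      have : ε i + ε i = (2 : R) • ε i := by rw [two_smul]
      rw [this, h2, h0, mul_zero]
    | zero => rw [bz b hb, hq0, mul_zero]
    | add u v hu hv ihu ihv =>
      rw [hba, hba', hba', hb.2.2 u v, hb.2.1 v u, ihu, ihv]
      ring
    | smul c u hu ihu =>
      rw [hbs, hbs', h2, ihu]
      ring
  -- uniqueness
  have uniq : ∀ b b' : V → V → R, IsCompanion q b → IsCompanion q b' → b = b' := by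
    intro b b' hb hb'
    funext x y
    have hx : x ∈ Submodule.span R (Set.range ε) := hgen ▸ Submodule.mem_top
    have hy : y ∈ Submodule.span R (Set.range ε) := hgen ▸ Submodule.mem_top
    induction hx using Submodule.span_induction with
    | mem v hv =>
      obtain ⟨i, rfl⟩ := hv
      induction hy using Submodule.span_induction with
      | mem w hw =>
        obtain ⟨j, rfl⟩ := hw
        rw [key b hb i j, key b' hb' i j]
      | zero => rw [bz' b hb, bz' b' hb']
      | add u v hu hv ihu ihv => rw [hb.1.2.1, hb'.1.2.1, ihu, ihv]
      | smul c u hu ihu => rw [hb.1.2.2.2, hb'.1.2.2.2, ihu]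
    | zero => rw [bz b hb, bz b' hb']
    | add u v hu hv ihu ihv => rw [hb.1.1, hb'.1.1, ihu, ihv]
    | smul c u hu ihu => rw [hb.1.2.2.1, hb'.1.2.2.1, ihu]
  refine ⟨⟨b0, hb0, fun b hb => uniq b b0 hb hb0⟩, fun b hb => ⟨bal b hb, key b hb⟩⟩
end

section
/- Let R be a semiring, V an R-module generated by (ε_i)_{i∈I} with |I| > 1, q: V → R a quadratic form, and b: V × V → R a symmetric bilinear form. If for any two distinct indices i, j the restriction of b to Rε_i + Rε_j is a companion of the restriction of q, then b is a companion of q. If additionally b(ε_i, ε_i) = 2q(ε_i) for every i ∈ I, then b is a balanced companion of q. -/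
variable {R : Type*} [CommSemiring R] {V : Type*} [AddCommMonoid V] [Module R V]

/-!
Fix any companion `b₀` of `q`. The pairs `(x, y)` with `q (x + y) = q x + q y + b x y` are closed
under addition in each variable: expanding `q (x₁ + x₂ + y)` with `b₀` produces the block
`q x₁ + q y + b₀ x₁ y = q (x₁ + y)`, which can then be re-expanded with `b`, so no subtraction is
needed. As a monoid `V` is generated by the multiples `c • ε i`, and any two of them lie in some
`R ε i + R ε k` with `i ≠ k` (this is where `|I| > 1` enters). The balanced identity
`b x x = 2 * q x` is preserved by sums and scalar multiples once `b` is a companion.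
-/

theorem IsBilin.zero_left {b : V → V → R} (hb : IsBilin b) (y : V) : b 0 y = 0 := by
  simpa using hb.2.2.1 0 0 y

theorem IsCompanion.polar_add_left {q : V → R} {b₀ b : V → V → R} (hb₀ : IsCompanion q b₀)
    (hb : ∀ x y z : V, b (x + y) z = b x z + b y z) {x₁ x₂ y : V}
    (h₁ : q (x₁ + y) = q x₁ + q y + b x₁ y) (h₂ : q (x₂ + y) = q x₂ + q y + b x₂ y) :
    q (x₁ + x₂ + y) = q (x₁ + x₂) + q y + b (x₁ + x₂) y := by
  obtain ⟨⟨-, hadd, -, -⟩, -, hpolar⟩ := hb₀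
  calc q (x₁ + x₂ + y) = q x₁ + q (x₂ + y) + b₀ x₁ (x₂ + y) := by rw [add_assoc, hpolar]
    _ = (q x₁ + q y + b₀ x₁ y) + q x₂ + b x₂ y + b₀ x₁ x₂ := by rw [h₂, hadd]; ring
    _ = (q x₁ + q y + b x₁ y) + q x₂ + b x₂ y + b₀ x₁ x₂ := by rw [← hpolar, h₁]
    _ = q (x₁ + x₂) + q y + b (x₁ + x₂) y := by rw [hpolar x₁ x₂, hb]; ring

open Pointwise in
theorem IsCompanion.of_span_eq_top {q : V → R} (hq : IsQuadForm q) {b : V → V → R}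
    (hbil : IsBilin b) (hsymm : ∀ x y : V, b x y = b y x) {S : Set V}
    (hS : Submodule.span R S = ⊤)
    (hpolar : ∀ x ∈ S, ∀ y ∈ S, ∀ c d : R,
      q (c • x + d • y) = q (c • x) + q (d • y) + b (c • x) (d • y)) :
    IsCompanion q b := by
  obtain ⟨hhom, b₀, hb₀⟩ := hq
  have hq0 : q 0 = 0 := by simpa using hhom 0 0
  have hswap : ∀ x y : V, q (x + y) = q x + q y + b x y → q (y + x) = q y + q x + b y x := by
    intro x y h
    rw [add_comm, h, hsymm, add_comm (q x)]
  have hclosure (x : V) : x ∈ AddSubmonoid.closure ((Set.univ : Set R) • S) := by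
    rw [← Submodule.span_eq_closure, hS]
    exact Submodule.mem_top
  refine ⟨hbil, hsymm, fun x y => ?_⟩
  induction hclosure x, hclosure y using AddSubmonoid.closure_induction₂ with
  | mem x y hx hy =>
    obtain ⟨c, -, x, hx, rfl⟩ := hx
    obtain ⟨d, -, y, hy, rfl⟩ := hy
    exact hpolar x hx y hy c d
  | zero_left y _ => simp [hq0, hbil.zero_left]
  | zero_right x _ => simp [hq0, hsymm x 0, hbil.zero_left]
  | add_left x₁ x₂ y _ _ _ h₁ h₂ => exact hb₀.polar_add_left hbil.1 h₁ h₂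
  | add_right y₁ y₂ x _ _ _ h₁ h₂ =>
    exact hswap _ _ (hb₀.polar_add_left hbil.1 (hswap _ _ h₁) (hswap _ _ h₂))

theorem IsCompanion.self_eq_two_mul_of_mem_span {q : V → R}
    (hhom : ∀ (c : R) (x : V), q (c • x) = c ^ 2 * q x) {b : V → V → R} (hb : IsCompanion q b)
    {S : Set V} (hS : ∀ s ∈ S, b s s = 2 * q s) {x : V} (hx : x ∈ Submodule.span R S) :
    b x x = 2 * q x := by
  obtain ⟨hbil, hsymm, hpolar⟩ := hb
  induction hx using Submodule.span_induction with
  | mem s hs => exact hS s hs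
  | zero => simp [hbil.zero_left, by simpa using hhom 0 0]
  | add u v _ _ hu hv =>
    rw [hbil.1, hbil.2.1, hbil.2.1, hu, hv, hsymm v u, hpolar]
    ring
  | smul c v _ hv =>
    rw [hbil.2.2.1, hbil.2.2.2, hv, hhom]
    ring

theorem polar_smul_smul_of_pairwise {I : Type*} [Nontrivial I] {ε : I → V} {q : V → R}
    {b : V → V → R}
    (h : ∀ i j : I, i ≠ j →
      ∀ x ∈ Submodule.span R ({ε i, ε j} : Set V),
      ∀ y ∈ Submodule.span R ({ε i, ε j} : Set V),
        q (x + y) = q x + q y + b x y)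
    (i j : I) (c d : R) :
    q (c • ε i + d • ε j) = q (c • ε i) + q (d • ε j) + b (c • ε i) (d • ε j) := by
  obtain ⟨k, hik, hj⟩ : ∃ k, i ≠ k ∧ ε j ∈ Submodule.span R ({ε i, ε k} : Set V) := by
    by_cases hij : i = j
    · obtain ⟨k, hk⟩ := exists_ne i
      exact ⟨k, hk.symm, hij ▸ Submodule.subset_span (Set.mem_insert _ _)⟩
    · exact ⟨j, hij, Submodule.subset_span (Set.mem_insert_of_mem _ rfl)⟩
  exact h i k hik _ (Submodule.smul_mem _ c (Submodule.subset_span (Set.mem_insert _ _)))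
    _ (Submodule.smul_mem _ d hj)

/-- A symmetric bilinear form which is a companion of `q` on every submodule generated by
two distinct generators is a companion of `q`; if moreover it is balanced on the
generators, it is a balanced companion. -/
theorem stmt6 {I : Type*} [Nontrivial I] (ε : I → V)
    (hgen : Submodule.span R (Set.range ε) = ⊤)
    (q : V → R) (hq : IsQuadForm q)
    (b : V → V → R) (hbil : IsBilin b) (hsymm : ∀ x y : V, b x y = b y x)
    (h : ∀ i j : I, i ≠ j →
      ∀ x ∈ Submodule.span R ({ε i, ε j} : Set V),
      ∀ y ∈ Submodule.span R ({ε i, ε j} : Set V),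
        q (x + y) = q x + q y + b x y) :
    IsCompanion q b ∧
    ((∀ i : I, b (ε i) (ε i) = 2 * q (ε i)) → ∀ x : V, b x x = 2 * q x) := by
  have hcomp : IsCompanion q b := by
    refine IsCompanion.of_span_eq_top hq hbil hsymm hgen ?_
    rintro _ ⟨i, rfl⟩ _ ⟨j, rfl⟩ c d
    exact polar_smul_smul_of_pairwise h i j c d
  refine ⟨hcomp, fun hbal x => ?_⟩
  refine hcomp.self_eq_two_mul_of_mem_span hq.1 ?_ (hgen ▸ Submodule.mem_top)
  rintro _ ⟨i, rfl⟩
  exact hbal i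
end

section
/- Let R be a semiring, V an R-module generated by (ε_i)_{i∈I} with |I| > 1, q: V → R a quadratic form, and B: V × V → R a bilinear form (not necessarily symmetric). If for any two distinct indices i, j the restriction of B to (Rε_i + Rε_j) × (Rε_i + Rε_j) is an expansion of q restricted to Rε_i + Rε_j, then B is an expansion of q, i.e., q(x) = B(x,x) for all x ∈ V. -/
variable {R : Type*} [CommSemiring R] {V : Type*} [AddCommMonoid V] [Module R V]

/-- A bilinear form which expands `q` on every submodule generated by two distinct
generators expands `q`. -/
theorem stmt7 {I : Type*} [Nontrivial I] (ε : I → V)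
    (hgen : Submodule.span R (Set.range ε) = ⊤)
    (q : V → R) (hq : IsQuadForm q)
    (B : V → V → R) (hbil : IsBilin B)
    (h : ∀ i j : I, i ≠ j →
      ∀ x ∈ Submodule.span R ({ε i, ε j} : Set V), q x = B x x) :
    ∀ x : V, q x = B x x := by
  classical
  obtain ⟨hB1, hB2, hB3, hB4⟩ := hbil
  obtain ⟨hhom, bb, ⟨hb1, hb2, hb3, hb4⟩, hbs, hbq⟩ := hq
  have hq0 : q 0 = 0 := by simpa using hhom 0 0
  have hB0 : B 0 0 = 0 := by simpa using hB3 0 0 0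
  have key : ∀ (T : Finset I) (f : I → R) (a : I) (b : R), a ∉ T →
      q (b • ε a + ∑ i ∈ T, f i • ε i)
        = B (b • ε a + ∑ i ∈ T, f i • ε i) (b • ε a + ∑ i ∈ T, f i • ε i) := by
    intro T
    induction T using Finset.induction_on with
    | empty =>
      intro f a b _
      simp only [Finset.sum_empty, add_zero]
      obtain ⟨j, hj⟩ := exists_ne a
      exact h a j (Ne.symm hj) _
        (Submodule.smul_mem _ _ (Submodule.subset_span (Set.mem_insert _ _)))
    | @insert j T hjT ih =>
      intro f a b haT
      have haj : a ≠ j := fun e => haT (e ▸ Finset.mem_insert_self j T)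
      have haT' : a ∉ T := fun hmem => haT (Finset.mem_insert_of_mem hmem)
      rw [Finset.sum_insert hjT]
      set w := b • ε a with hwdef
      set z := f j • ε j with hzdef
      set y := ∑ i ∈ T, f i • ε i with hydef
      -- memberships in span {ε a, ε j}
      have hmw : w ∈ Submodule.span R ({ε a, ε j} : Set V) :=
        Submodule.smul_mem _ _ (Submodule.subset_span (Set.mem_insert _ _))
      have hmz : z ∈ Submodule.span R ({ε a, ε j} : Set V) :=
        Submodule.smul_mem _ _ (Submodule.subset_span (by simp))
      have hw : q w = B w w := h a j haj w hmw
      have hz : q z = B z z := h a j haj z hmz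
      have hwz : q (w + z) = B (w + z) (w + z) := h a j haj _ (Submodule.add_mem _ hmw hmz)
      have hy : q y = B y y := by
        have := ih f a 0 haT'
        simpa using this
      have IH1 : q (w + y) = B (w + y) (w + y) := ih f a b haT'
      have IH2 : q (z + y) = B (z + y) (z + y) := ih f j (f j) hjT
      have E1 : B w w + B y y + bb w y = B w w + B y y + (B w y + B y w) := by
        rw [hbq, hw, hy] at IH1
        calc B w w + B y y + bb w y = B (w + y) (w + y) := IH1
          _ = B w w + B w y + (B y w + B y y) := by rw [hB1, hB2, hB2]
          _ = B w w + B y y + (B w y + B y w) := by ring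
      have E2 : B z z + B y y + bb z y = B z z + B y y + (B z y + B y z) := by
        rw [hbq, hz, hy] at IH2
        calc B z z + B y y + bb z y = B (z + y) (z + y) := IH2
          _ = B z z + B z y + (B y z + B y y) := by rw [hB1, hB2, hB2]
          _ = B z z + B y y + (B z y + B y z) := by ring
      have hwz' : q (w + z) = B w w + B w z + (B z w + B z z) := by
        rw [hwz, hB1, hB2, hB2]
      calc q (w + (z + y))
          = q (w + z) + q y + (bb w y + bb z y) := by
            rw [← add_assoc, hbq, hb1]
        _ = (B w w + B w z + (B z w + B z z)) + B y y + (bb w y + bb z y) := by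
            rw [hwz', hy]
        _ = (B w w + B y y + bb w y) + (B w z + B z w + B z z + bb z y) := by ring
        _ = (B w w + B y y + (B w y + B y w)) + (B w z + B z w + B z z + bb z y) := by
            rw [E1]
        _ = (B z z + B y y + bb z y) + (B w w + B w y + B y w + B w z + B z w) := by ring
        _ = (B z z + B y y + (B z y + B y z)) + (B w w + B w y + B y w + B w z + B z w) := by
            rw [E2]
        _ = B (w + (z + y)) (w + (z + y)) := by
            simp only [hB1, hB2]; ring
  have key2 : ∀ (T : Finset I) (f : I → R),
      q (∑ i ∈ T, f i • ε i) = B (∑ i ∈ T, f i • ε i) (∑ i ∈ T, f i • ε i) := by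
    intro T f
    rcases T.eq_empty_or_nonempty with rfl | ⟨a, ha⟩
    · simp [hq0, hB0]
    · rw [← Finset.insert_erase ha, Finset.sum_insert (Finset.notMem_erase a T)]
      exact key (T.erase a) f a (f a) (Finset.notMem_erase a T)
  intro x
  have hx : x ∈ Submodule.span R (Set.range ε) := hgen ▸ Submodule.mem_top
  rw [Finsupp.mem_span_range_iff_exists_finsupp] at hx
  obtain ⟨c, hc⟩ := hx
  rw [← hc, Finsupp.sum]
  exact key2 c.support (fun i => c i)
end

section
/- Let λ: R' → R be a surjective semiring homomorphism, φ: V' → V a surjective λ-semilinear map from a free R'-module V' to an R-module V. Then every quadratic form q: V → R can be lifted to a quadratic form q': V' → R' such that λ ∘ q' = q ∘ φ. -/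
variable {R : Type*} [CommSemiring R] {V : Type*} [AddCommMonoid V] [Module R V]

/-! Order the basis `ε'` well and lift, through the surjection `lam`, the values `q (φ (ε' i))`
onto the diagonal and `b (φ (ε' i)) (φ (ε' j))` (for `i < j`) above the diagonal of a triangular
matrix over `R'`, `b` a companion of `q`. With `B` the bilinear form of that matrix, `q' x = B x x`
is a quadratic form, and expanding along the order,
`q (∑ i ∈ s, w i) = ∑ i ∈ s, (q (w i) + ∑ j < i, b (w j) (w i))`, shows `lam ∘ q' = q ∘ φ`.
Only sums of lifted values occur, so no subtraction (and no polar form) is ever needed. -/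

open Finset

theorem map_zero_of_map_smul {q : V → R} (hq : ∀ (c : R) (x : V), q (c • x) = c ^ 2 * q x) :
    q 0 = 0 := by
  simpa using hq 0 0

theorem IsBilin.map_sum_left {b : V → V → R} (hb : IsBilin b) {I : Type*} (s : Finset I)
    (w : I → V) (y : V) : b (∑ i ∈ s, w i) y = ∑ i ∈ s, b (w i) y := by
  classical
  induction s using Finset.induction_on with
  | empty => simpa using hb.2.2.1 0 0 y
  | insert i s hi ih => rw [sum_insert hi, sum_insert hi, hb.1, ih]

theorem IsCompanion.apply_sum {q : V → R} {b : V → V → R} (hb : IsCompanion q b) (hq0 : q 0 = 0)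
    {I : Type*} [LinearOrder I] (s : Finset I) (w : I → V) :
    q (∑ i ∈ s, w i) = ∑ i ∈ s, (q (w i) + ∑ j ∈ s with j < i, b (w j) (w i)) := by
  induction s using Finset.induction_on_max with
  | empty => simp [hq0]
  | insert a s ha ih =>
    have haS : a ∉ s := fun h => lt_irrefl a (ha a h)
    have hfilter_max : {j ∈ insert a s | j < a} = s := by
      rw [filter_insert, if_neg (lt_irrefl a), filter_true_of_mem ha]
    have hrest : ∑ i ∈ s, (q (w i) + ∑ j ∈ insert a s with j < i, b (w j) (w i)) =
        ∑ i ∈ s, (q (w i) + ∑ j ∈ s with j < i, b (w j) (w i)) :=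
      sum_congr rfl fun i hi => by rw [filter_insert, if_neg (ha i hi).not_gt]
    rw [sum_insert haS, sum_insert haS, add_comm, hb.2.2, ih, hb.1.map_sum_left, hfilter_max,
      hrest]
    ac_rfl

theorem isCompanion_apply_self (B : V →ₗ[R] V →ₗ[R] R) :
    IsCompanion (fun x => B x x) (fun x y => B x y + B y x) := by
  refine ⟨⟨?_, ?_, ?_, ?_⟩, fun x y => add_comm _ _, fun x y => ?_⟩ <;>
    intros <;> simp only [map_add, map_smul, LinearMap.add_apply, LinearMap.smul_apply,
      smul_eq_mul] <;> ring

theorem isQuadForm_apply_self (B : V →ₗ[R] V →ₗ[R] R) : IsQuadForm fun x => B x x := by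
  refine ⟨fun c x => ?_, _, isCompanion_apply_self B⟩
  simp only [map_smul, LinearMap.smul_apply, smul_eq_mul]
  ring

theorem apply_self_eq_of_basis {R' V' I : Type*} [CommSemiring R'] [AddCommMonoid V']
    [Module R' V'] [LinearOrder I] {lam : R' →+* R} (ε' : Module.Basis I R' V')
    (φ : V' →ₛₗ[lam] V) (B : V' →ₗ[R'] V' →ₗ[R'] R') {q : V → R} {b : V → V → R}
    (hq : ∀ (c : R) (x : V), q (c • x) = c ^ 2 * q x) (hb : IsCompanion q b)
    (hdiag : ∀ i, lam (B (ε' i) (ε' i)) = q (φ (ε' i)))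
    (hoff : ∀ i j, j < i → lam (B (ε' j) (ε' i) + B (ε' i) (ε' j)) = b (φ (ε' j)) (φ (ε' i)))
    (x : V') : lam (B x x) = q (φ x) := by
  obtain ⟨s, a, rfl⟩ : ∃ (s : Finset I) (a : I → R'), x = ∑ i ∈ s, a i • ε' i :=
    ⟨_, _, by rw [← ε'.linearCombination_repr x, Finsupp.linearCombination_apply, Finsupp.sum]⟩
  rw [(isCompanion_apply_self B).apply_sum (by simp), map_sum, map_sum,
    hb.apply_sum (map_zero_of_map_smul hq)]
  refine sum_congr rfl fun i _ => ?_
  simp only [map_add, map_sum, map_smul, map_smulₛₗ, LinearMap.smul_apply, smul_eq_mul, map_mul,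
    hq, hb.1.2.2.1, hb.1.2.2.2, hdiag]
  congr 1
  · ring
  · refine sum_congr rfl fun j hj => ?_
    rw [← hoff i j (mem_filter.1 hj).2, map_add]
    ring

theorem exists_bilin_lift {R' V' I : Type*} [CommSemiring R'] [AddCommMonoid V'] [Module R' V']
    {lam : R' →+* R} (hlam : Function.Surjective lam) (ε' : Module.Basis I R' V')
    (φ : V' →ₛₗ[lam] V) {q : V → R} {b : V → V → R}
    (hq : ∀ (c : R) (x : V), q (c • x) = c ^ 2 * q x) (hb : IsCompanion q b) :
    ∃ B : V' →ₗ[R'] V' →ₗ[R'] R', ∀ x, lam (B x x) = q (φ x) := by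
  classical
  let : LinearOrder I := IsWellOrder.linearOrder WellOrderingRel
  choose lift hlift using hlam
  let c : I → I → R' := fun i j =>
    if i = j then lift (q (φ (ε' i))) else if i < j then lift (b (φ (ε' i)) (φ (ε' j))) else 0
  let B := ε'.constr R' fun i => ε'.constr R' fun j => c i j
  have hB : ∀ i j, B (ε' i) (ε' j) = c i j := by simp [B]
  refine ⟨B, apply_self_eq_of_basis ε' φ B hq hb (fun i => by simp [hB, c, hlift]) ?_⟩
  intro i j hji
  simp [hB, c, hji.ne, hji.ne', hji, hji.not_gt, hlift]

theorem stmt8_general {R' : Type*} [CommSemiring R'] {V' : Type*} [AddCommMonoid V'] [Module R' V']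
    {I : Type*} (lam : R' →+* R) (hlam : Function.Surjective lam)
    (ε' : Module.Basis I R' V') (φ : V' → V)
    (hadd : ∀ x y : V', φ (x + y) = φ x + φ y)
    (hsmul : ∀ (a : R') (x : V'), φ (a • x) = lam a • φ x)
    (q : V → R) (hq : IsQuadForm q) :
    ∃ q' : V' → R', IsQuadForm q' ∧ ∀ x' : V', lam (q' x') = q (φ x') := by
  obtain ⟨hq_smul, b, hb⟩ := hq
  obtain ⟨B, hB⟩ := exists_bilin_lift hlam ε' ⟨⟨φ, hadd⟩, hsmul⟩ hq_smul hb
  exact ⟨fun x => B x x, isQuadForm_apply_self B, hB⟩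

/-- Every quadratic form on `V` can be lifted through a surjective semilinear map from a
free module. -/
theorem stmt8 {R' : Type*} [CommSemiring R'] {V' : Type*} [AddCommMonoid V'] [Module R' V']
    {I : Type*} (lam : R' →+* R) (hlam : Function.Surjective lam)
    (ε' : Module.Basis I R' V') (φ : V' → V)
    (hadd : ∀ x y : V', φ (x + y) = φ x + φ y)
    (hsmul : ∀ (a : R') (x : V'), φ (a • x) = lam a • φ x)
    (hsurj : Function.Surjective φ)
    (q : V → R) (hq : IsQuadForm q) :
    ∃ q' : V' → R', IsQuadForm q' ∧ ∀ x' : V', lam (q' x') = q (φ x') :=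
  stmt8_general lam hlam ε' φ hadd hsmul q hq
end

section
/- Let λ: R → R' be a surjective semiring homomorphism, (q,b) a quadratic pair on an R-module V, and φ: V → V' a surjective λ-semilinear map onto an R'-module V'. Then (q,b) admits a λ-pushdown along φ (a quadratic pair (q',b') on V' with q'∘φ = λ∘q and b'∘(φ×φ) = λ∘b) if and only if E(φ) ⊆ E_λ(q,b), where E(φ) = {(x₁,x₂) : φ(x₁)=φ(x₂)} and E_λ(q,b) = {(x₁,x₂) : λ(q(x₁))=λ(q(x₂)) and λ(b(x₁,y))=λ(b(x₂,y)) for all y ∈ V}. -/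
variable {R : Type*} [CommSemiring R] {V : Type*} [AddCommMonoid V] [Module R V]

/-- A quadratic pair admits a `λ`-pushdown along a surjective `λ`-semilinear map `φ` iff
the equivalence relation of `φ` is contained in `E_λ(q,b)`. -/
theorem stmt17 {R' : Type*} [CommSemiring R'] {V' : Type*} [AddCommMonoid V'] [Module R' V']
    (lam : R →+* R') (hlam : Function.Surjective lam)
    (φ : V → V')
    (hadd : ∀ x y : V, φ (x + y) = φ x + φ y)
    (hsmul : ∀ (a : R) (x : V), φ (a • x) = lam a • φ x)
    (hsurj : Function.Surjective φ)
    (q : V → R) (b : V → V → R)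
    (hq : ∀ (c : R) (x : V), q (c • x) = c ^ 2 * q x)
    (hb : IsCompanion q b) :
    (∃ (q' : V' → R') (b' : V' → V' → R'),
      (∀ (c : R') (x : V'), q' (c • x) = c ^ 2 * q' x) ∧
      IsCompanion q' b' ∧
      (∀ x : V, q' (φ x) = lam (q x)) ∧
      (∀ x y : V, b' (φ x) (φ y) = lam (b x y))) ↔
    (∀ x₁ x₂ : V, φ x₁ = φ x₂ →
      lam (q x₁) = lam (q x₂) ∧ ∀ y : V, lam (b x₁ y) = lam (b x₂ y)) := by
  constructor
  · rintro ⟨q', b', hq', hcomp, hqphi, hbphi⟩ x₁ x₂ hx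
    exact ⟨by rw [← hqphi, ← hqphi, hx], fun y => by rw [← hbphi, ← hbphi, hx]⟩
  · intro hE
    obtain ⟨⟨h1, h2, h3, h4⟩, hsym, hqadd⟩ := hb
    have hsurj2 := hsurj
    choose s hs using hsurj
    have keyq : ∀ x, lam (q (s (φ x))) = lam (q x) := fun x => (hE _ _ (hs (φ x))).1
    have keyb : ∀ x y, lam (b (s (φ x)) (s (φ y))) = lam (b x y) := by
      intro x y
      rw [(hE _ _ (hs (φ x))).2 (s (φ y)), hsym, (hE _ _ (hs (φ y))).2 x, hsym]
    refine ⟨fun v => lam (q (s v)), fun v w => lam (b (s v) (s w)), ?_,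
      ⟨⟨?_, ?_, ?_, ?_⟩, ?_, ?_⟩, keyq, keyb⟩
    · intro c x
      obtain ⟨a, rfl⟩ := hlam c
      obtain ⟨u, rfl⟩ := hsurj2 x
      dsimp only
      rw [← hsmul, keyq, keyq, hq, map_mul, map_pow]
    · intro x y z
      obtain ⟨u, rfl⟩ := hsurj2 x; obtain ⟨v, rfl⟩ := hsurj2 y; obtain ⟨w, rfl⟩ := hsurj2 z
      dsimp only
      rw [← hadd, keyb, keyb, keyb, h1, map_add]
    · intro x y z
      obtain ⟨u, rfl⟩ := hsurj2 x; obtain ⟨v, rfl⟩ := hsurj2 y; obtain ⟨w, rfl⟩ := hsurj2 z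
      dsimp only
      rw [← hadd, keyb, keyb, keyb, h2, map_add]
    · intro c x y
      obtain ⟨a, rfl⟩ := hlam c
      obtain ⟨u, rfl⟩ := hsurj2 x; obtain ⟨v, rfl⟩ := hsurj2 y
      dsimp only
      rw [← hsmul, keyb, keyb, h3, map_mul]
    · intro c x y
      obtain ⟨a, rfl⟩ := hlam c
      obtain ⟨u, rfl⟩ := hsurj2 x; obtain ⟨v, rfl⟩ := hsurj2 y
      dsimp only
      rw [← hsmul, keyb, keyb, h4, map_mul]
    · intro x y
      obtain ⟨u, rfl⟩ := hsurj2 x; obtain ⟨v, rfl⟩ := hsurj2 y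
      dsimp only
      rw [keyb, keyb, hsym]
    · intro x y
      obtain ⟨u, rfl⟩ := hsurj2 x; obtain ⟨v, rfl⟩ := hsurj2 y
      dsimp only
      rw [← hadd, keyq, keyq, keyq, keyb, hqadd, map_add, map_add]
end
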